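/- arXiv:1111.3325 — 6 statements merged into one kernel-verified Lean document; each statement's English description precedes it below -/
import Mathlib

section
/- Let 𝓜 be a family of vertex-disjoint non-trivial paths in a graph G, and let k ≥ 1, d ≥ 0. If 𝓜 is a size-minimum (d,k)-extension of itself, then every path in 𝓜 has length at least 2k−1. -/
open Finset

variable {V : Type*}

/-- A path in `G`, packaged with its endpoints. -/
abbrev PathIn (G : SimpleGraph V) := Σ u : V, Σ v : V, {w : G.Walk u v // w.IsPath}

/-- The length of a packaged path. -/
def plen {G : SimpleGraph V} (p : PathIn G) : ℕ := p.2.2.1.length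

/-- The support (vertex list) of a packaged path. -/
def psupp {G : SimpleGraph V} (p : PathIn G) : List V := p.2.2.1.support

/-- The union of the vertex sets of the paths of a family. -/
def Vset [DecidableEq V] {G : SimpleGraph V} (M : Finset (PathIn G)) : Finset V :=
  M.biUnion (fun p => (psupp p).toFinset)

/-- The union of the edge sets of the paths of a family. -/
def Eset [DecidableEq V] {G : SimpleGraph V} (M : Finset (PathIn G)) : Finset (Sym2 V) :=
  M.biUnion (fun p => p.2.2.1.edges.toFinset)

/-- A family of non-trivial vertex-disjoint paths. -/
def goodFam {G : SimpleGraph V} (M : Finset (PathIn G)) : Prop :=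
  (∀ p ∈ M, 0 < plen p) ∧
  (∀ p ∈ M, ∀ q ∈ M, p ≠ q → ∀ v, v ∈ psupp p → v ∉ psupp q)

/-- `M'` is a `(d,k)`-extension of `M`. -/
def isExtension [DecidableEq V] {G : SimpleGraph V} (d k : ℕ)
    (M M' : Finset (PathIn G)) : Prop :=
  goodFam M' ∧ M'.card ≤ M.card ∧
  ((Eset M) \ (Eset M')).card ≤ 2 * (k - 1) * (M.card - M'.card) ∧
  ((Eset M') \ (Eset M)).card ≤ (d + 2) * (M.card - M'.card)

/-- `M` is a size-minimum `(d,k)`-extension of itself. -/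
def sizeMinSelf [DecidableEq V] {G : SimpleGraph V} (d k : ℕ)
    (M : Finset (PathIn G)) : Prop :=
  goodFam M ∧ ∀ M' : Finset (PathIn G), isExtension d k M M' → M.card ≤ M'.card

/-- The `k`-end of a path: vertices within path-distance `k-1` of an endpoint. -/
def kEnd [DecidableEq V] {G : SimpleGraph V} (k : ℕ) (p : PathIn G) : Finset V :=
  ((psupp p).take k).toFinset ∪ ((psupp p).reverse.take k).toFinset

/-- if a family `M` of non-trivial vertex-disjoint paths is a
size-minimum `(d,k)`-extension of itself (`k ≥ 1`), then every path of `M` has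
length at least `2k − 1`. -/
theorem stmt3 [DecidableEq V] {G : SimpleGraph V} (d k : ℕ) (hk : 1 ≤ k)
    (M : Finset (PathIn G)) (hM : sizeMinSelf d k M) :
    ∀ p ∈ M, 2 * k - 1 ≤ plen p := by
  intro p hp
  by_contra hlt
  push_neg at hlt
  have hplen : plen p ≤ 2 * (k - 1) := by omega
  set M' := M.erase p with hM'
  have hsub : M' ⊆ M := Finset.erase_subset _ _
  have hcard : M'.card = M.card - 1 := Finset.card_erase_of_mem hp
  have hMpos : 1 ≤ M.card := Finset.card_pos.mpr ⟨p, hp⟩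
  have hdiff : M.card - M'.card = 1 := by omega
  -- Eset M' ⊆ Eset M
  have hEsub : Eset M' ⊆ Eset M := by
    intro e he
    simp only [Eset, Finset.mem_biUnion] at he ⊢
    obtain ⟨q, hq, hqe⟩ := he
    exact ⟨q, hsub hq, hqe⟩
  have hE2 : (Eset M' \ Eset M) = ∅ := Finset.sdiff_eq_empty_iff_subset.mpr hEsub
  -- Eset M \ Eset M' ⊆ edges of p
  have hE1 : (Eset M \ Eset M') ⊆ p.2.2.1.edges.toFinset := by
    intro e he
    simp only [Finset.mem_sdiff, Eset, Finset.mem_biUnion] at he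
    obtain ⟨⟨q, hq, hqe⟩, hnot⟩ := he
    by_cases hqp : q = p
    · subst hqp; exact hqe
    · exact absurd ⟨q, Finset.mem_erase.mpr ⟨hqp, hq⟩, hqe⟩ hnot
  have hE1card : (Eset M \ Eset M').card ≤ 2 * (k - 1) := by
    calc (Eset M \ Eset M').card ≤ p.2.2.1.edges.toFinset.card :=
          Finset.card_le_card hE1
      _ ≤ p.2.2.1.edges.length := p.2.2.1.edges.toFinset_card_le
      _ = plen p := p.2.2.1.length_edges
      _ ≤ 2 * (k - 1) := hplen
  have hext : isExtension d k M M' := by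
    refine ⟨⟨fun q hq => hM.1.1 q (hsub hq),
      fun q hq r hr hqr v hv => hM.1.2 q (hsub hq) r (hsub hr) hqr v hv⟩,
      Finset.card_le_card hsub, ?_, ?_⟩
    · rw [hdiff]; simpa using hE1card
    · rw [hE2, hdiff]; simp
  have := hM.2 M' hext
  omega
end

section
/- Let 𝓜 be a family of non-trivial vertex-disjoint paths in a graph G that is a size-minimum (d,k)-extension of itself. Then for any two distinct paths P₁, P₂ ∈ 𝓜, any vertex x in the k-end of P₁ and any vertex y in the k-end of P₂, any a ∈ N(x) \ V(𝓜) and b ∈ N(y) \ V(𝓜), there is no a–b path of length at most d in G − V(𝓜). -/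
open Finset

variable {V : Type*}

/-!
Suppose such an `a`–`b` path `w` exists. Since `x` lies in the `k`-end of `P₁`, the subpath of
`P₁` from its far endpoint to `x` misses at most `k - 1` edges of `P₁`; likewise for `y` and `P₂`.
Joining these two subpaths through the edges `x a`, `b y` and the path `w` gives a path `Q`, and
replacing `P₁, P₂` by `Q` loses at most `2 (k - 1)` old edges and adds at most `d + 2` new ones.
This is a `(d,k)`-extension with one path fewer, contradicting size-minimality.
-/

open SimpleGraph Walk

lemma List.Nodup.length_le_idxOf_add {α : Type*} [DecidableEq α] {l : List α} {x : α}
    {k : ℕ} (hl : l.Nodup) (hx : x ∈ l.reverse.take k) : l.length ≤ l.idxOf x + k := by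
  obtain ⟨i, hi, rfl⟩ := List.mem_take_iff_getElem.1 hx
  rw [List.getElem_reverse, hl.idxOf_getElem]
  simp only [List.length_reverse] at hi
  omega

namespace SimpleGraph.Walk

variable {G : SimpleGraph V} {u v x : V}

lemma card_edges_toFinset_le [DecidableEq V] (w : G.Walk u v) : w.edges.toFinset.card ≤ w.length :=
  (List.toFinset_card_le _).trans_eq w.length_edges

lemma IsTrail.card_edges_toFinset_sdiff [DecidableEq V] {u' v' : V} {w : G.Walk u v} {W : G.Walk u' v'}
    (hw : w.IsTrail) (hW : W.IsSubwalk w) :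
    (w.edges.toFinset \ W.edges.toFinset).card = w.length - W.length := by
  rw [Finset.card_sdiff_of_subset fun _ he ↦
      List.mem_toFinset.2 (hW.edges_subset (List.mem_toFinset.1 he)),
    List.toFinset_card_of_nodup hw.edges_nodup,
    List.toFinset_card_of_nodup (hw.edges_nodup.sublist hW.edges_isInfix.sublist),
    length_edges, length_edges]

lemma IsPath.exists_isSubwalk_card_edges_sdiff_le [DecidableEq V] {w : G.Walk u v} (hw : w.IsPath) {k : ℕ}
    (hx : x ∈ w.support.reverse.take k) :
    ∃ W : G.Walk u x, W.IsSubwalk w ∧ (w.edges.toFinset \ W.edges.toFinset).card ≤ k - 1 := by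
  have hxw : x ∈ w.support := List.mem_reverse.1 (List.mem_of_mem_take hx)
  refine ⟨w.takeUntil x hxw, w.isSubwalk_takeUntil hxw, ?_⟩
  have hidx := hw.support_nodup.length_le_idxOf_add hx
  rw [length_support] at hidx
  rw [hw.isTrail.card_edges_toFinset_sdiff (w.isSubwalk_takeUntil hxw), length_takeUntil]
  omega

section linkVia

variable {c₁ c₂ y a b : V}

def linkVia (W₁ : G.Walk c₁ x) (hxa : G.Adj x a) (w : G.Walk a b) (hby : G.Adj b y)
    (W₂ : G.Walk c₂ y) : G.Walk c₁ c₂ :=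
  W₁.append (cons hxa (w.append (cons hby W₂.reverse)))

variable {W₁ : G.Walk c₁ x} {w : G.Walk a b} {W₂ : G.Walk c₂ y}

@[simp]
lemma support_linkVia (hxa : G.Adj x a) (hby : G.Adj b y) :
    (W₁.linkVia hxa w hby W₂).support = W₁.support ++ (w.support ++ W₂.support.reverse) := by
  simp [linkVia, support_append]

@[simp]
lemma edges_linkVia (hxa : G.Adj x a) (hby : G.Adj b y) :
    (W₁.linkVia hxa w hby W₂).edges =
      W₁.edges ++ s(x, a) :: (w.edges ++ s(b, y) :: W₂.edges.reverse) := by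
  simp [linkVia, edges_append]

lemma isPath_linkVia (hxa : G.Adj x a) (hby : G.Adj b y) (hW₁ : W₁.IsPath) (hw : w.IsPath)
    (hW₂ : W₂.IsPath) (h₁ : W₁.support.Disjoint w.support)
    (h₂ : w.support.Disjoint W₂.support) (h₁₂ : W₁.support.Disjoint W₂.support) :
    (W₁.linkVia hxa w hby W₂).IsPath := by
  rw [isPath_def, support_linkVia]
  refine hW₁.support_nodup.append (hw.support_nodup.append
    (List.nodup_reverse.2 hW₂.support_nodup) ?_) ?_
  · exact fun z hz hz' ↦ h₂ hz (List.mem_reverse.1 hz')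
  · intro z hz hz'
    rcases List.mem_append.1 hz' with hz' | hz'
    exacts [h₁ hz hz', h₁₂ hz (List.mem_reverse.1 hz')]

lemma card_edges_linkVia_sdiff_le [DecidableEq V] (hxa : G.Adj x a) (hby : G.Adj b y)
    {S : Finset (Sym2 V)} (hW₁ : ∀ e ∈ W₁.edges, e ∈ S) (hW₂ : ∀ e ∈ W₂.edges, e ∈ S) :
    ((W₁.linkVia hxa w hby W₂).edges.toFinset \ S).card ≤ w.length + 2 := by
  have hsub : (W₁.linkVia hxa w hby W₂).edges.toFinset \ S ⊆
      insert s(x, a) (insert s(b, y) w.edges.toFinset) := by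
    intro e he
    obtain ⟨he, heS⟩ := Finset.mem_sdiff.1 he
    simp only [edges_linkVia, List.mem_toFinset, List.mem_append, List.mem_cons,
      List.mem_reverse] at he
    simp only [Finset.mem_insert, List.mem_toFinset]
    rcases he with he | he | he | he | he
    exacts [absurd (hW₁ e he) heS, .inl he, .inr (.inr he), .inr (.inl he),
      absurd (hW₂ e he) heS]
  calc _ ≤ _ := Finset.card_le_card hsub
    _ ≤ (insert s(b, y) w.edges.toFinset).card + 1 := Finset.card_insert_le _ _
    _ ≤ w.edges.toFinset.card + 2 := by grw [Finset.card_insert_le]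
    _ ≤ w.length + 2 := by grw [card_edges_toFinset_le]

lemma length_linkVia_pos (hxa : G.Adj x a) (hby : G.Adj b y) :
    0 < (W₁.linkVia hxa w hby W₂).length := by
  simp [linkVia]

end linkVia

end SimpleGraph.Walk

section Families

variable [DecidableEq V] {G : SimpleGraph V}

lemma mem_Vset_of_mem {M : Finset (PathIn G)} {p : PathIn G} (hp : p ∈ M) {z : V}
    (hz : z ∈ psupp p) : z ∈ Vset M :=
  Finset.mem_biUnion.2 ⟨p, hp, List.mem_toFinset.2 hz⟩

lemma mem_Eset_of_mem {M : Finset (PathIn G)} {p : PathIn G} (hp : p ∈ M) {e : Sym2 V}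
    (he : e ∈ p.2.2.1.edges) : e ∈ Eset M :=
  Finset.mem_biUnion.2 ⟨p, hp, List.mem_toFinset.2 he⟩

def IsLongSubpath (k : ℕ) (p : PathIn G) {c x : V} (W : G.Walk c x) : Prop :=
  W.IsPath ∧ W.support ⊆ psupp p ∧ W.edges ⊆ p.2.2.1.edges ∧
    (p.2.2.1.edges.toFinset \ W.edges.toFinset).card ≤ k - 1

lemma exists_isLongSubpath_of_mem_kEnd {k : ℕ} {p : PathIn G} {x : V} (hx : x ∈ kEnd k p) :
    ∃ c, ∃ W : G.Walk c x, IsLongSubpath k p W := by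
  obtain ⟨u, v, w, hw⟩ := p
  simp only [kEnd, psupp, Finset.mem_union, List.mem_toFinset] at hx
  rcases hx with hx | hx
  · obtain ⟨W, hW, hcard⟩ := hw.reverse.exists_isSubwalk_card_edges_sdiff_le (k := k)
      (by rwa [support_reverse, List.reverse_reverse])
    refine ⟨v, W, isPath_of_isSubwalk hW hw.reverse, ?_, ?_, ?_⟩
    · simpa [psupp] using hW.support_subset
    · simpa using hW.edges_subset
    · simpa using hcard
  · obtain ⟨W, hW, hcard⟩ := hw.exists_isSubwalk_card_edges_sdiff_le hx
    exact ⟨u, W, isPath_of_isSubwalk hW hw, hW.support_subset, hW.edges_subset, hcard⟩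

def replacePair (M : Finset (PathIn G)) (P₁ P₂ Q : PathIn G) : Finset (PathIn G) :=
  insert Q ((M.erase P₁).erase P₂)

variable {M : Finset (PathIn G)} {P₁ P₂ Q : PathIn G}

lemma mem_replacePair {p : PathIn G} :
    p ∈ replacePair M P₁ P₂ Q ↔ p = Q ∨ p ∈ M ∧ p ≠ P₁ ∧ p ≠ P₂ := by
  simp only [replacePair, Finset.mem_insert, Finset.mem_erase]
  tauto

lemma card_replacePair (hP₁ : P₁ ∈ M) (hP₂ : P₂ ∈ M) (hne : P₁ ≠ P₂) (hQ : Q ∉ M) :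
    (replacePair M P₁ P₂ Q).card + 1 = M.card := by
  have hP₂' : P₂ ∈ M.erase P₁ := Finset.mem_erase.2 ⟨hne.symm, hP₂⟩
  have hQ' : Q ∉ (M.erase P₁).erase P₂ := fun h ↦
    hQ (Finset.mem_of_mem_erase (Finset.mem_of_mem_erase h))
  have hpos := Finset.card_pos.2 ⟨P₂, hP₂'⟩
  rw [Finset.card_erase_of_mem hP₁] at hpos
  rw [replacePair, Finset.card_insert_of_notMem hQ', Finset.card_erase_of_mem hP₂',
    Finset.card_erase_of_mem hP₁]
  omega

lemma goodFam_replacePair (hM : goodFam M) (hQ : 0 < plen Q)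
    (hQM : ∀ p ∈ M, p ≠ P₁ → p ≠ P₂ → ∀ z ∈ psupp Q, z ∉ psupp p) :
    goodFam (replacePair M P₁ P₂ Q) := by
  refine ⟨fun p hp ↦ ?_, fun p hp q hq hpq z hzp hzq ↦ ?_⟩
  · rcases mem_replacePair.1 hp with rfl | ⟨hpM, -⟩
    exacts [hQ, hM.1 p hpM]
  rcases mem_replacePair.1 hp with rfl | ⟨hpM, hp₁, hp₂⟩ <;>
    rcases mem_replacePair.1 hq with rfl | ⟨hqM, hq₁, hq₂⟩
  · exact hpq rfl
  · exact hQM q hqM hq₁ hq₂ z hzp hzq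
  · exact hQM p hpM hp₁ hp₂ z hzq hzp
  · exact hM.2 p hpM q hqM hpq z hzp hzq

lemma Eset_sdiff_replacePair_subset :
    Eset M \ Eset (replacePair M P₁ P₂ Q) ⊆
      (P₁.2.2.1.edges.toFinset ∪ P₂.2.2.1.edges.toFinset) \ Q.2.2.1.edges.toFinset := by
  intro e he
  obtain ⟨heM, heM'⟩ := Finset.mem_sdiff.1 he
  obtain ⟨p, hp, hep⟩ := Finset.mem_biUnion.1 heM
  refine Finset.mem_sdiff.2 ⟨?_, fun heQ ↦ heM' ?_⟩
  · by_cases h₁ : p = P₁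
    · exact Finset.mem_union_left _ (h₁ ▸ hep)
    by_cases h₂ : p = P₂
    · exact Finset.mem_union_right _ (h₂ ▸ hep)
    exact absurd (Finset.mem_biUnion.2 ⟨p, mem_replacePair.2 (.inr ⟨hp, h₁, h₂⟩), hep⟩) heM'
  · exact Finset.mem_biUnion.2 ⟨Q, mem_replacePair.2 (.inl rfl), heQ⟩

lemma Eset_replacePair_sdiff_subset :
    Eset (replacePair M P₁ P₂ Q) \ Eset M ⊆ Q.2.2.1.edges.toFinset \ Eset M := by
  intro e he
  obtain ⟨heM', heM⟩ := Finset.mem_sdiff.1 he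
  obtain ⟨p, hp, hep⟩ := Finset.mem_biUnion.1 heM'
  rcases mem_replacePair.1 hp with rfl | ⟨hpM, -⟩
  · exact Finset.mem_sdiff.2 ⟨hep, heM⟩
  · exact absurd (Finset.mem_biUnion.2 ⟨p, hpM, hep⟩) heM

lemma isExtension_replacePair {d k : ℕ} (hP₁ : P₁ ∈ M) (hP₂ : P₂ ∈ M) (hne : P₁ ≠ P₂)
    (hQM : Q ∉ M) (hgood : goodFam (replacePair M P₁ P₂ Q))
    (h₁ : (P₁.2.2.1.edges.toFinset \ Q.2.2.1.edges.toFinset).card ≤ k - 1)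
    (h₂ : (P₂.2.2.1.edges.toFinset \ Q.2.2.1.edges.toFinset).card ≤ k - 1)
    (hnew : (Q.2.2.1.edges.toFinset \ Eset M).card ≤ d + 2) :
    isExtension d k M (replacePair M P₁ P₂ Q) := by
  have hμ : M.card - (replacePair M P₁ P₂ Q).card = 1 := by
    have := card_replacePair hP₁ hP₂ hne hQM
    omega
  refine ⟨hgood, by omega, ?_, ?_⟩
  · calc _ ≤ _ := Finset.card_le_card Eset_sdiff_replacePair_subset
      _ ≤ (k - 1) + (k - 1) := by
        rw [Finset.union_sdiff_distrib]
        exact (Finset.card_union_le _ _).trans (add_le_add h₁ h₂)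
      _ = _ := by rw [hμ]; ring
  · rw [hμ, mul_one]
    exact (Finset.card_le_card Eset_replacePair_sdiff_subset).trans hnew

lemma exists_extension_of_short_connection {d k : ℕ} (hM : goodFam M) (hP₁ : P₁ ∈ M)
    (hP₂ : P₂ ∈ M) (hne : P₁ ≠ P₂) {c₁ c₂ x y a b : V} {W₁ : G.Walk c₁ x}
    {W₂ : G.Walk c₂ y} (hW₁ : IsLongSubpath k P₁ W₁) (hW₂ : IsLongSubpath k P₂ W₂)
    (hxa : G.Adj x a) (hyb : G.Adj y b) {w : G.Walk a b} (hw : w.IsPath) (hwd : w.length ≤ d)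
    (hwM : ∀ v ∈ w.support, v ∉ Vset M) :
    ∃ M', isExtension d k M M' ∧ M'.card < M.card := by
  obtain ⟨hW₁p, hW₁s, hW₁e, hW₁c⟩ := hW₁
  obtain ⟨hW₂p, hW₂s, hW₂e, hW₂c⟩ := hW₂
  have hP₁₂ := hM.2 P₁ hP₁ P₂ hP₂ hne
  have hQp := isPath_linkVia hxa hyb.symm hW₁p hw hW₂p
    (fun z h₁ h ↦ hwM z h (mem_Vset_of_mem hP₁ (hW₁s h₁)))
    (fun z h h₂ ↦ hwM z h (mem_Vset_of_mem hP₂ (hW₂s h₂)))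
    (fun z h₁ h₂ ↦ hP₁₂ z (hW₁s h₁) (hW₂s h₂))
  set Q : PathIn G := ⟨c₁, c₂, _, hQp⟩
  have hQM : Q ∉ M := fun h ↦ hwM a w.start_mem_support (mem_Vset_of_mem h (by simp [Q, psupp]))
  have hgood : goodFam (replacePair M P₁ P₂ Q) := by
    refine goodFam_replacePair hM (length_linkVia_pos _ _) fun p hp hp₁ hp₂ z hzQ hzp ↦ ?_
    simp only [Q, psupp, support_linkVia, List.mem_append, List.mem_reverse] at hzQ
    rcases hzQ with hz | hz | hz
    · exact hM.2 P₁ hP₁ p hp (Ne.symm hp₁) z (hW₁s hz) hzp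
    · exact hwM z hz (mem_Vset_of_mem hp hzp)
    · exact hM.2 P₂ hP₂ p hp (Ne.symm hp₂) z (hW₂s hz) hzp
  have hQ₁ : W₁.edges.toFinset ⊆ Q.2.2.1.edges.toFinset := fun e he ↦ by simp [Q, List.mem_toFinset.1 he]
  have hQ₂ : W₂.edges.toFinset ⊆ Q.2.2.1.edges.toFinset := fun e he ↦ by simp [Q, List.mem_toFinset.1 he]
  refine ⟨_, isExtension_replacePair hP₁ hP₂ hne hQM hgood
    ((Finset.card_le_card (Finset.sdiff_subset_sdiff subset_rfl hQ₁)).trans hW₁c)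
    ((Finset.card_le_card (Finset.sdiff_subset_sdiff subset_rfl hQ₂)).trans hW₂c)
    ((card_edges_linkVia_sdiff_le hxa hyb.symm (fun e he ↦ mem_Eset_of_mem hP₁ (hW₁e he))
      (fun e he ↦ mem_Eset_of_mem hP₂ (hW₂e he))).trans (by omega)), ?_⟩
  have := card_replacePair hP₁ hP₂ hne hQM
  omega

end Families

theorem stmt4_general [DecidableEq V] {G : SimpleGraph V} (d k : ℕ)
    (M : Finset (PathIn G)) (hM : sizeMinSelf d k M)
    (P₁ P₂ : PathIn G) (hP₁ : P₁ ∈ M) (hP₂ : P₂ ∈ M) (hne : P₁ ≠ P₂)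
    (x y : V) (hx : x ∈ kEnd k P₁) (hy : y ∈ kEnd k P₂)
    (a b : V) (hxa : G.Adj x a) (hyb : G.Adj y b) :
    ¬ ∃ w : G.Walk a b, w.IsPath ∧ w.length ≤ d ∧ ∀ v ∈ w.support, v ∉ Vset M := by
  rintro ⟨w, hw, hwd, hwM⟩
  obtain ⟨c₁, W₁, hW₁⟩ := exists_isLongSubpath_of_mem_kEnd hx
  obtain ⟨c₂, W₂, hW₂⟩ := exists_isLongSubpath_of_mem_kEnd hy
  obtain ⟨M', hext, hlt⟩ :=
    exists_extension_of_short_connection hM.1 hP₁ hP₂ hne hW₁ hW₂ hxa hyb hw hwd hwM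
  exact (hM.2 M' hext).not_gt hlt

/-- in a size-minimum `(d,k)`-self-extension `M`, for distinct paths
`P₁, P₂ ∈ M`, `x` in the `k`-end of `P₁`, `y` in the `k`-end of `P₂`, and neighbors
`a` of `x` and `b` of `y` outside `V(M)`, there is no `a`–`b` path of length at most
`d` in `G − V(M)`. -/
theorem stmt4 [DecidableEq V] {G : SimpleGraph V} (d k : ℕ) (hk : 1 ≤ k)
    (M : Finset (PathIn G)) (hM : sizeMinSelf d k M)
    (P₁ P₂ : PathIn G) (hP₁ : P₁ ∈ M) (hP₂ : P₂ ∈ M) (hne : P₁ ≠ P₂)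
    (x y : V) (hx : x ∈ kEnd k P₁) (hy : y ∈ kEnd k P₂)
    (a b : V) (hxa : G.Adj x a) (hyb : G.Adj y b)
    (haM : a ∉ Vset M) (hbM : b ∉ Vset M) :
    ¬ ∃ w : G.Walk a b, w.IsPath ∧ w.length ≤ d ∧ ∀ v ∈ w.support, v ∉ Vset M :=
  stmt4_general d k M hM P₁ P₂ hP₁ hP₂ hne x y hx hy a b hxa hyb
end

section
/- Let G be a d-regular graph on n vertices whose adjacency matrix has second largest absolute eigenvalue λ. Then for every nonempty set X of vertices, |N(X) ∪ X| ≥ d²|X| / (λ² + (d² − λ²)|X|/n), where N(X) denotes the neighborhood of X (Tanner's bound). -/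
/-!
Let `f` be the indicator vector of `X`. Then `A f` vanishes outside `X ∪ N(X)` and sums to
`d |X|`, so Cauchy–Schwarz gives `(d |X|)² ≤ |X ∪ N(X)| ‖A f‖²`. Writing `f` as its mean
`|X| / n` (an eigenvector of `A` for `d`) plus a part orthogonal to the all-ones vector
(contracted by `λ`) gives `‖A f‖² ≤ λ² |X| (1 - |X| / n) + d² |X|² / n`, and combining the two
bounds is Tanner's inequality.
-/

open Finset

/-- External neighborhood: vertices outside `A` with a neighbor in `A`. -/
def extNbhd {V : Type*} [Fintype V] [DecidableEq V] (G : SimpleGraph V)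
    [DecidableRel G.Adj] (A : Finset V) : Finset V :=
  Finset.univ.filter (fun v => v ∉ A ∧ ∃ a ∈ A, G.Adj a v)

open Matrix

theorem sq_sum_le_card_mul_sum_sq_of_eq_zero_off {ι : Type*} [Fintype ι] {s : Finset ι}
    {g : ι → ℝ} (hg : ∀ i ∉ s, g i = 0) : (∑ i, g i) ^ 2 ≤ #s * ∑ i, g i ^ 2 := by
  have hsum : ∑ i ∈ s, g i = ∑ i, g i :=
    sum_subset (subset_univ s) fun i _ hi ↦ hg i hi
  calc (∑ i, g i) ^ 2 = (∑ i ∈ s, g i) ^ 2 := by rw [hsum]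
    _ ≤ #s * ∑ i ∈ s, g i ^ 2 := sq_sum_le_card_mul_sum_sq
    _ ≤ #s * ∑ i, g i ^ 2 := by
      gcongr
      exact subset_univ s

theorem sum_add_const_sq {ι : Type*} [Fintype ι] (g : ι → ℝ) (a : ℝ) :
    ∑ i, (g i + a) ^ 2 = ∑ i, g i ^ 2 + 2 * a * ∑ i, g i + Fintype.card ι * a ^ 2 := by
  simp only [add_sq, sum_add_distrib, ← sum_mul, ← mul_sum, sum_const, card_univ, nsmul_eq_mul]
  ring

theorem sq_add_sub_sq_mul_div_nonneg (a b : ℝ) {k n : ℝ} (hk : 0 ≤ k) (hkn : k ≤ n) :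
    0 ≤ a ^ 2 + (b ^ 2 - a ^ 2) * k / n := by
  rcases hk.eq_or_lt with rfl | hk
  · simp [sq_nonneg]
  have hkn' : k / n ≤ 1 := div_le_one_of_le₀ hkn (hk.le.trans hkn)
  have : a ^ 2 + (b ^ 2 - a ^ 2) * k / n = a ^ 2 * (1 - k / n) + b ^ 2 * (k / n) := by ring
  rw [this]
  exact add_nonneg (mul_nonneg (sq_nonneg a) (sub_nonneg.2 hkn'))
    (mul_nonneg (sq_nonneg b) (div_nonneg hk.le (hk.le.trans hkn)))

namespace SimpleGraph

variable {V : Type*} [Fintype V] {G : SimpleGraph V} [DecidableRel G.Adj]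

theorem sum_adjMatrix_mulVec_of_regular {α : Type*} [CommSemiring α] {d : ℕ}
    (hreg : G.IsRegularOfDegree d) (x : V → α) :
    ∑ v, (G.adjMatrix α *ᵥ x) v = d * ∑ v, x v := by
  have hcol : (1 : V → α) ᵥ* G.adjMatrix α = fun _ ↦ (d : α) := by
    ext u
    simp [hreg u]
  rw [← one_dotProduct, dotProduct_mulVec, hcol, mul_sum]
  rfl

theorem adjMatrix_mulVec_apply_eq_zero [DecidableEq V] {α : Type*} [NonAssocSemiring α]
    {X : Finset V} {x : V → α} (hx : ∀ u ∉ X, x u = 0) {v : V}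
    (hv : v ∉ X ∪ extNbhd G X) : (G.adjMatrix α *ᵥ x) v = 0 := by
  simp only [mem_union, extNbhd, mem_filter, mem_univ, true_and, not_or, not_and,
    not_exists] at hv
  rw [adjMatrix_mulVec_apply]
  refine sum_eq_zero fun u hu ↦ hx u fun huX ↦ hv.2 hv.1 u huX ?_
  exact ((mem_neighborFinset G v u).1 hu).symm

theorem sum_sq_adjMatrix_mulVec_le [Nonempty V] {d : ℕ} {lam : ℝ}
    (hreg : G.IsRegularOfDegree d)
    (hlam : ∀ x : V → ℝ, (∑ v, x v) = 0 →
      ∑ v, ((G.adjMatrix ℝ).mulVec x v) ^ 2 ≤ lam ^ 2 * ∑ v, (x v) ^ 2)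
    (f : V → ℝ) :
    ∑ v, (G.adjMatrix ℝ *ᵥ f) v ^ 2 ≤
      lam ^ 2 * (∑ v, f v ^ 2 - (∑ v, f v) ^ 2 / Fintype.card V) +
        d ^ 2 * (∑ v, f v) ^ 2 / Fintype.card V := by
  set n : ℝ := (Fintype.card V : ℝ)
  have hn : n ≠ 0 := by positivity
  set c := (∑ v, f v) / n
  set x : V → ℝ := fun v ↦ f v - c
  have hx : ∑ v, x v = 0 := by
    simp only [x, sum_sub_distrib, sum_const, card_univ, nsmul_eq_mul, c]
    field_simp
    ring
  have hf : ∀ v, f v = x v + c := fun v ↦ by simp [x]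
  have hAf : ∀ v, (G.adjMatrix ℝ *ᵥ f) v = (G.adjMatrix ℝ *ᵥ x) v + d * c := fun v ↦ by
    rw [show f = x + Function.const V c from funext hf, mulVec_add, Pi.add_apply,
      adjMatrix_mulVec_const_apply_of_regular hreg]
  have hAx : ∑ v, (G.adjMatrix ℝ *ᵥ x) v = 0 := by
    rw [sum_adjMatrix_mulVec_of_regular hreg, hx, mul_zero]
  have hAf_sq :
      ∑ v, (G.adjMatrix ℝ *ᵥ f) v ^ 2 = ∑ v, (G.adjMatrix ℝ *ᵥ x) v ^ 2 + n * (d * c) ^ 2 := by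
    simp_rw [hAf, sum_add_const_sq, hAx]
    ring
  have hf_sq : ∑ v, f v ^ 2 = ∑ v, x v ^ 2 + n * c ^ 2 := by
    simp_rw [hf, sum_add_const_sq, hx]
    ring
  have hf_sum : ∑ v, f v = n * c := by
    simp only [c]
    field_simp
  calc ∑ v, (G.adjMatrix ℝ *ᵥ f) v ^ 2
      ≤ lam ^ 2 * ∑ v, x v ^ 2 + n * (d * c) ^ 2 := by
        rw [hAf_sq]
        gcongr
        exact hlam x hx
    _ = _ := by
        rw [hf_sq, hf_sum]
        field_simp
        ring

end SimpleGraph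

open SimpleGraph in
/-- Tanner's bound: let `G` be `d`-regular on `n` vertices whose
adjacency matrix has second largest absolute eigenvalue `lam` (expressed by: the
adjacency operator contracts, by a factor `lam`, every vector orthogonal to the
all-ones vector). Then for every nonempty vertex set `X`,
`|X ∪ N(X)| ≥ d²|X| / (lam² + (d² − lam²)|X|/n)`. -/
theorem stmt13 {V : Type*} [Fintype V] [DecidableEq V] (G : SimpleGraph V)
    [DecidableRel G.Adj] (d : ℕ) (lam : ℝ)
    (hreg : G.IsRegularOfDegree d)
    (hlam : ∀ x : V → ℝ, (∑ v, x v) = 0 →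
      ∑ v, ((G.adjMatrix ℝ).mulVec x v) ^ 2 ≤ lam ^ 2 * ∑ v, (x v) ^ 2)
    (X : Finset V) (hX : X.Nonempty) :
    ((d : ℝ) ^ 2 * X.card) /
        (lam ^ 2 + ((d : ℝ) ^ 2 - lam ^ 2) * X.card / (Fintype.card V)) ≤
      ((X ∪ extNbhd G X).card : ℝ) := by
  have : Nonempty V := ⟨hX.choose⟩
  set f : V → ℝ := fun v ↦ if v ∈ X then 1 else 0
  have hf_sum : ∑ v, f v = #X := by simp [f]
  have hf_sq : ∑ v, f v ^ 2 = #X := by simp [f]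
  have hcs : ((d : ℝ) * #X) ^ 2 ≤ #(X ∪ extNbhd G X) * ∑ v, (G.adjMatrix ℝ *ᵥ f) v ^ 2 := by
    rw [← hf_sum, ← sum_adjMatrix_mulVec_of_regular hreg]
    exact sq_sum_le_card_mul_sum_sq_of_eq_zero_off fun v hv ↦
      adjMatrix_mulVec_apply_eq_zero (fun u hu ↦ if_neg hu) hv
  have hspec := sum_sq_adjMatrix_mulVec_le hreg hlam f
  rw [hf_sum, hf_sq] at hspec
  set D := lam ^ 2 + ((d : ℝ) ^ 2 - lam ^ 2) * #X / Fintype.card V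
  have hD : 0 ≤ D :=
    sq_add_sub_sq_mul_div_nonneg lam d (Nat.cast_nonneg _) (Nat.cast_le.2 (card_le_univ X))
  have hAf_sq : ∑ v, (G.adjMatrix ℝ *ᵥ f) v ^ 2 ≤ #X * D := hspec.trans_eq (by ring)
  have hXpos : (0 : ℝ) < #X := by positivity
  refine div_le_of_le_mul₀ hD (by positivity) (le_of_mul_le_mul_left ?_ hXpos)
  calc (#X : ℝ) * (d ^ 2 * #X) = (d * #X) ^ 2 := by ring
    _ ≤ #(X ∪ extNbhd G X) * (#X * D) := hcs.trans (by gcongr)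
    _ = #X * (#(X ∪ extNbhd G X) * D) := by ring
end

section
/- Suppose a sequence of families 𝓜₁ ⊇-in-size 𝓜₂, ..., of vertex-disjoint non-trivial paths is built so that each 𝓜_{i+1} is a (d,k_i)-extension of 𝓜_i with fixed d. If 𝓜₁ is a matching with m edges, then V(𝓜_j) has at most (d+3)·m vertices for every j. -/
open Finset

variable {V : Type*}

/-! A family of vertex-disjoint paths spans `|E| + |M|` vertices. Under a `(d,k)`-extension that
drops `μ` paths at most `(d+2)μ` edges appear, so the potential `|E| + (d+2)|M|` never increases.
It starts at `m + (d+2)m` for a matching with `m` edges and dominates `|V| = |E| + |M|`. -/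

section PathFamilies

variable [DecidableEq V] {G : SimpleGraph V}

lemma card_psupp_toFinset (p : PathIn G) : (psupp p).toFinset.card = plen p + 1 := by
  rw [psupp, List.toFinset_card_of_nodup p.2.2.2.support_nodup]
  simp [plen]

lemma card_edges_toFinset (p : PathIn G) : p.2.2.1.edges.toFinset.card = plen p := by
  rw [List.toFinset_card_of_nodup p.2.2.2.edges_nodup]
  simp [plen]

namespace goodFam

variable {M : Finset (PathIn G)}

lemma disjoint_psupp (h : goodFam M) {p q : PathIn G} (hp : p ∈ M) (hq : q ∈ M) (hpq : p ≠ q) :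
    Disjoint (psupp p).toFinset (psupp q).toFinset := by
  rw [Finset.disjoint_left]
  intro v hvp hvq
  exact h.2 p hp q hq hpq v (List.mem_toFinset.mp hvp) (List.mem_toFinset.mp hvq)

lemma disjoint_edges (h : goodFam M) {p q : PathIn G} (hp : p ∈ M) (hq : q ∈ M) (hpq : p ≠ q) :
    Disjoint p.2.2.1.edges.toFinset q.2.2.1.edges.toFinset := by
  rw [Finset.disjoint_left]
  intro e hep heq
  induction e with
  | h a b =>
    exact Finset.disjoint_left.mp (h.disjoint_psupp hp hq hpq)
      (List.mem_toFinset.mpr <| SimpleGraph.Walk.fst_mem_support_of_mem_edges _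
        (List.mem_toFinset.mp hep))
      (List.mem_toFinset.mpr <| SimpleGraph.Walk.fst_mem_support_of_mem_edges _
        (List.mem_toFinset.mp heq))

lemma card_Eset (h : goodFam M) : (Eset M).card = ∑ p ∈ M, plen p := by
  rw [Eset, Finset.card_biUnion fun p hp q hq hpq => h.disjoint_edges hp hq hpq]
  exact Finset.sum_congr rfl fun p _ => card_edges_toFinset p

lemma card_Vset (h : goodFam M) : (Vset M).card = (Eset M).card + M.card := by
  rw [h.card_Eset, Vset, Finset.card_biUnion fun p hp q hq hpq => h.disjoint_psupp hp hq hpq,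
    Finset.sum_congr rfl fun p _ => card_psupp_toFinset p, Finset.sum_add_distrib]
  simp

end goodFam

lemma isExtension.card_Eset_add_le {d k : ℕ} {M M' : Finset (PathIn G)}
    (h : isExtension d k M M') :
    (Eset M').card + (d + 2) * M'.card ≤ (Eset M).card + (d + 2) * M.card := by
  obtain ⟨-, hcard, -, hnew⟩ := h
  have hE : (Eset M').card ≤ ((Eset M') \ (Eset M)).card + (Eset M).card :=
    Finset.card_le_card_sdiff_add_card
  have hsplit : (d + 2) * M.card = (d + 2) * (M.card - M'.card) + (d + 2) * M'.card := by
    rw [← Nat.mul_add, Nat.sub_add_cancel hcard]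
  omega

end PathFamilies

/-- if `M 0` is a matching with `m` edges (a family of vertex-disjoint
paths of length `1`), and each `M (i+1)` is a `(d, k i)`-extension of `M i` (fixed
`d`, varying `k`), then every `M j` spans at most `(d+3)·m` vertices. -/
theorem stmt14 [DecidableEq V] {G : SimpleGraph V} (d m : ℕ) (k : ℕ → ℕ)
    (M : ℕ → Finset (PathIn G))
    (hfam : goodFam (M 0)) (hlen : ∀ p ∈ M 0, plen p = 1)
    (hm : (Eset (M 0)).card = m)
    (hext : ∀ i, isExtension d (k i) (M i) (M (i + 1))) :
    ∀ j, (Vset (M j)).card ≤ (d + 3) * m := by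
  have hcard0 : (M 0).card = m := by
    rw [← hm, hfam.card_Eset, Finset.sum_congr rfl hlen]
    simp
  have hpotential : Antitone fun j => (Eset (M j)).card + (d + 2) * (M j).card :=
    antitone_nat_of_succ_le fun i => (hext i).card_Eset_add_le
  intro j
  have hgood : goodFam (M j) := by
    cases j with
    | zero => exact hfam
    | succ i => exact (hext i).1
  have hj := hpotential (Nat.zero_le j)
  simp only [hm, hcard0] at hj
  rw [hgood.card_Vset]
  nlinarith
end

section
/- Let G be a graph, let F ⊆ E(G) be a matching, let C be a cycle in G with V(C) ≠ V(G), and let w ∈ V(C) have a neighbor a outside C. Then there exists a path P in G with vertex set V(C) ∪ {a}, of length |C|, containing all edges of F ∩ E(C). -/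
/-!
Of the two cycle edges at `w` at most one lies in the matching `F`. Deleting the other one turns
the cycle into a path ending at `w`, and the edge `w a` extends it to `a`; every edge of `F` on
the cycle survives.
-/

namespace SimpleGraph.Walk

variable {V : Type*} [DecidableEq V] {G : SimpleGraph V} {w a : V} {c : G.Walk w w}

theorem IsCycle.exists_isPath_insert_of_edge_snd_notMem (hc : c.IsCycle) (ha : a ∉ c.support)
    (hadj : G.Adj w a) {F : Set (Sym2 V)} (hF : s(w, c.snd) ∉ F) :
    ∃ (x y : V) (P : G.Walk x y), P.IsPath ∧
      P.support.toFinset = insert a c.support.toFinset ∧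
      P.length = c.length ∧
      ∀ e ∈ F, e ∈ c.edges → e ∈ P.edges := by
  cases c with
  | nil => exact absurd hc not_isCycle_nil
  | @cons _ v _ h q =>
    obtain ⟨hq, -⟩ := cons_isCycle_iff q h |>.mp hc
    simp only [support_cons, List.mem_cons, not_or] at ha
    refine ⟨a, v, cons hadj.symm q.reverse, ?_, ?_, by simp, ?_⟩
    · exact (cons_isPath_iff _ _).mpr ⟨hq.reverse, by simpa using ha.2⟩
    · have hw : w ∈ q.support := q.end_mem_support
      ext x
      simp only [support_cons, support_reverse, List.toFinset_cons, List.toFinset_reverse,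
        Finset.mem_insert, List.mem_toFinset]
      grind
    · intro e heF hec
      simp only [edges_cons, List.mem_cons, edges_reverse, List.mem_reverse] at hec ⊢
      rcases hec with rfl | hec
      · exact absurd heF (by rwa [snd_cons] at hF)
      · exact Or.inr hec

theorem IsCycle.exists_isPath_insert_of_adj (hc : c.IsCycle) (ha : a ∉ c.support)
    (hadj : G.Adj w a) {F : Set (Sym2 V)}
    (hF : s(w, c.snd) ∉ F ∨ s(w, c.penultimate) ∉ F) :
    ∃ (x y : V) (P : G.Walk x y), P.IsPath ∧
      P.support.toFinset = insert a c.support.toFinset ∧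
      P.length = c.length ∧
      ∀ e ∈ F, e ∈ c.edges → e ∈ P.edges := by
  rcases hF with hF | hF
  · exact hc.exists_isPath_insert_of_edge_snd_notMem ha hadj hF
  · obtain ⟨x, y, P, hP, hsupp, hlen, hedges⟩ :=
      hc.reverse.exists_isPath_insert_of_edge_snd_notMem (by simpa using ha) hadj (F := F)
        (by rwa [snd_reverse])
    refine ⟨x, y, P, hP, by simpa using hsupp, by simpa using hlen, fun e he hec => ?_⟩
    exact hedges e he (by simpa using hec)

end SimpleGraph.Walk

theorem stmt16_general {V : Type*} [DecidableEq V] (G : SimpleGraph V)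
    (F : Finset (Sym2 V))
    (hFmatch : ∀ e ∈ F, ∀ f ∈ F, e ≠ f → ∀ v : V, v ∈ e → v ∉ f)
    {w : V} (c : G.Walk w w) (hc : c.IsCycle)
    (a : V) (ha : a ∉ c.support) (hadj : G.Adj w a) :
    ∃ (x y : V) (P : G.Walk x y), P.IsPath ∧
      P.support.toFinset = insert a c.support.toFinset ∧
      P.length = c.length ∧
      ∀ e ∈ F, e ∈ c.edges → e ∈ P.edges := by
  refine hc.exists_isPath_insert_of_adj ha hadj (F := F) ?_
  by_contra! h
  have hne : s(w, c.snd) ≠ s(w, c.penultimate) :=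
    fun heq => hc.snd_ne_penultimate (Sym2.congr_right.mp heq)
  exact hFmatch _ h.1 _ h.2 hne w (Sym2.mem_mk_left _ _) (Sym2.mem_mk_left _ _)

/-- let `F` be a matching in `G`, `C` a non-spanning cycle, and
`a ∉ V(C)` a neighbor of `w ∈ V(C)`. Then there is a path in `G` with vertex set
`V(C) ∪ {a}`, of length `|C|`, containing all edges of `F ∩ E(C)`. -/
theorem stmt16 {V : Type*} [DecidableEq V] (G : SimpleGraph V)
    (F : Finset (Sym2 V)) (hFE : ∀ e ∈ F, e ∈ G.edgeSet)
    (hFmatch : ∀ e ∈ F, ∀ f ∈ F, e ≠ f → ∀ v : V, v ∈ e → v ∉ f)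
    {w : V} (c : G.Walk w w) (hc : c.IsCycle)
    (a : V) (ha : a ∉ c.support) (hadj : G.Adj w a) :
    ∃ (x y : V) (P : G.Walk x y), P.IsPath ∧
      P.support.toFinset = insert a c.support.toFinset ∧
      P.length = c.length ∧
      ∀ e ∈ F, e ∈ c.edges → e ∈ P.edges :=
  stmt16_general G F hFmatch c hc a ha hadj
end

section
/- Let G be an n-vertex graph with a Hamilton packing of size h (h pairwise edge-disjoint Hamilton cycles), and suppose that for some constant c, every matching of G can be covered by at most c Hamilton cycles of G. Then G has a Hamilton covering of size at most h + 2c·(Δ(G) − 2h). -/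
/-!
Delete the edges of the packing. Every vertex lies on two edges of each of the `h` Hamilton
cycles, so the remaining graph has maximum degree at most `Δ(G) - 2h`. A greedy colouring splits
its edges into `2(Δ(G) - 2h)` matchings, since an edge meets fewer than `2(Δ(G) - 2h)` others; each
matching is covered by `c` Hamilton cycles, and together with the packing these cover `G`.
-/

open Finset

namespace SimpleGraph

variable {V : Type*}

theorem exists_coloring_of_forall_card_adj_lt {α : Type*} [DecidableEq α] (H : SimpleGraph α)
    [DecidableRel H.Adj] (m : ℕ) (S : Finset α) (hS : ∀ x ∈ S, #{y ∈ S | H.Adj x y} < m) :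
    ∃ col : α → ℕ, (∀ x ∈ S, col x < m) ∧ ∀ x ∈ S, ∀ y ∈ S, H.Adj x y → col x ≠ col y := by
  induction S using Finset.induction_on with
  | empty => exact ⟨fun _ => 0, by simp, by simp⟩
  | insert a S ha ih =>
    obtain ⟨col, hlt, hproper⟩ := ih fun x hx =>
      (card_le_card (filter_subset_filter _ (subset_insert a S))).trans_lt
        (hS x (mem_insert_of_mem hx))
    have hfree : #((S.filter (H.Adj a)).image col) < #(range m) := by
      rw [card_range]
      exact card_image_le.trans_lt <|
        (card_le_card (filter_subset_filter _ (subset_insert a S))).trans_lt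
          (hS a (mem_insert_self a S))
    obtain ⟨c, hcm, hc⟩ := exists_mem_notMem_of_card_lt_card hfree
    have hc_ne : ∀ y ∈ S, H.Adj a y → c ≠ col y := fun y hy hay hcy =>
      hc (mem_image.mpr ⟨y, mem_filter.mpr ⟨hy, hay⟩, hcy.symm⟩)
    have hne : ∀ y ∈ S, y ≠ a := fun y hy hya => ha (hya ▸ hy)
    refine ⟨Function.update col a c, ?_, ?_⟩
    · intro x hx
      rcases mem_insert.mp hx with rfl | hx
      · simpa using hcm
      · simpa [hne x hx] using hlt x hx
    · intro x hx y hy hxy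
      rcases mem_insert.mp hx with rfl | hxS <;> rcases mem_insert.mp hy with rfl | hyS
      · exact (H.irrefl hxy).elim
      · simpa [hne y hyS] using hc_ne y hyS hxy
      · simpa [hne x hxS] using (hc_ne x hxS hxy.symm).symm
      · simpa [hne x hxS, hne y hyS] using hproper x hxS y hyS hxy

theorem exists_matching_coloring_of_card_incident_le [DecidableEq V]
    (S : Finset (Sym2 V)) (k : ℕ) (hS : ∀ v, #{e ∈ S | v ∈ e} ≤ k) :
    ∃ col : Sym2 V → ℕ, (∀ e ∈ S, col e < 2 * k) ∧
      ∀ e ∈ S, ∀ e' ∈ S, e ≠ e' → col e = col e' → ∀ v, v ∈ e → v ∉ e' := by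
  classical
  -- An edge `s(a, b)` of `S` meets at most `k - 1` further edges at `a` and at `b`.
  let H := SimpleGraph.fromRel fun e e' : Sym2 V => ∃ v, v ∈ e ∧ v ∈ e'
  have hdeg : ∀ e ∈ S, #{e' ∈ S | H.Adj e e'} < 2 * k := by
    intro e he
    induction e using Sym2.ind with
    | _ a b =>
    have hincident : ∀ w ∈ s(a, b), #({e' ∈ S | w ∈ e'}.erase s(a, b)) + 1 ≤ k := fun w hw => by
      rw [card_erase_add_one (mem_filter.mpr ⟨he, hw⟩)]
      exact hS w
    have hsub : {e' ∈ S | H.Adj s(a, b) e'} ⊆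
        {e' ∈ S | a ∈ e'}.erase s(a, b) ∪ {e' ∈ S | b ∈ e'}.erase s(a, b) := by
      intro e' he'
      simp only [H, mem_filter, SimpleGraph.fromRel_adj, Sym2.mem_iff] at he'
      obtain ⟨he', hne, ⟨w, rfl | rfl, hw⟩ | ⟨w, hw, rfl | rfl⟩⟩ := he' <;>
        simp [he', hw, Ne.symm hne]
    have := (card_le_card hsub).trans (card_union_le _ _)
    have := hincident a (Sym2.mem_mk_left a b)
    have := hincident b (Sym2.mem_mk_right a b)
    omega
  obtain ⟨col, hlt, hproper⟩ := exists_coloring_of_forall_card_adj_lt H (2 * k) S hdeg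
  exact ⟨col, hlt, fun e he e' he' hne hcol v hve hve' =>
    hproper e he e' he' ⟨hne, Or.inl ⟨v, hve, hve'⟩⟩ hcol⟩

variable {G : SimpleGraph V}

theorem Walk.IsCycle.two_le_card_incident_edges [DecidableEq V] {u v : V} {p : G.Walk u u}
    (hp : p.IsCycle) (hv : v ∈ p.support) : 2 ≤ #{e ∈ p.edges.toFinset | v ∈ e} := by
  let q := p.rotate v hv
  have hq : ¬q.Nil := (hp.rotate hv).not_nil
  have hne : s(v, q.snd) ≠ s(q.penultimate, v) := by
    rw [Sym2.eq_swap]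
    exact fun h => (hp.rotate hv).snd_ne_penultimate (Sym2.congr_left.mp h)
  have hsub : {s(v, q.snd), s(q.penultimate, v)} ⊆ {e ∈ p.edges.toFinset | v ∈ e} := by
    have hedges : ∀ e ∈ q.edges, e ∈ p.edges := fun _ => (p.rotate_edges v hv).mem_iff.mp
    simp only [insert_subset_iff, singleton_subset_iff, mem_filter, List.mem_toFinset,
      Sym2.mem_mk_left, Sym2.mem_mk_right, and_true]
    exact ⟨hedges _ (q.mk_start_snd_mem_edges hq), hedges _ (q.mk_penultimate_end_mem_edges hq)⟩
  exact (card_pair hne).symm.le.trans (card_le_card hsub)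

theorem card_incident_sdiff_edges_le_maxDegree_sub [Fintype V] [DecidableEq V]
    [DecidableRel G.Adj] {h : ℕ} (f : Fin h → Σ v : V, G.Walk v v)
    (hf : ∀ i, (f i).2.IsHamiltonianCycle)
    (hdisj : ∀ i j, i ≠ j → ∀ e, e ∈ (f i).2.edges → e ∉ (f j).2.edges) (v : V) :
    #{e ∈ G.edgeFinset \ univ.biUnion (fun i => (f i).2.edges.toFinset) | v ∈ e} ≤
      G.maxDegree - 2 * h := by
  set P := univ.biUnion fun i => (f i).2.edges.toFinset
  have hP : P ⊆ G.edgeFinset := fun e he => by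
    obtain ⟨i, -, hi⟩ := mem_biUnion.mp he
    exact mem_edgeFinset.mpr ((f i).2.edges_subset_edgeSet (List.mem_toFinset.mp hi))
  have hsplit : #{e ∈ G.edgeFinset \ P | v ∈ e} + #{e ∈ P | v ∈ e} = G.degree v := by
    rw [← card_union_of_disjoint (disjoint_filter_filter sdiff_disjoint), ← filter_union,
      sdiff_union_of_subset hP, ← incidenceFinset_eq_filter, card_incidenceFinset_eq_degree]
  have hpacked : 2 * h ≤ #{e ∈ P | v ∈ e} := by
    rw [filter_biUnion, card_biUnion]
    · calc 2 * h = ∑ _i : Fin h, 2 := by simp [mul_comm]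
        _ ≤ _ := sum_le_sum fun i _ =>
          (hf i).isCycle.two_le_card_incident_edges ((hf i).mem_support v)
    · intro i _ j _ hij
      exact Finset.disjoint_left.mpr fun e hei hej =>
        hdisj i j hij e (List.mem_toFinset.mp (mem_filter.mp hei).1)
          (List.mem_toFinset.mp (mem_filter.mp hej).1)
  have := G.degree_le_maxDegree v
  omega

def HamiltonCoverable [DecidableEq V] (G : SimpleGraph V) (E : Set (Sym2 V)) (N : ℕ) : Prop :=
  ∃ (M : ℕ) (f : Fin M → Σ v : V, G.Walk v v), M ≤ N ∧
    (∀ i, (f i).2.IsHamiltonianCycle) ∧ ∀ e ∈ E, ∃ i, e ∈ (f i).2.edges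

namespace HamiltonCoverable

variable [DecidableEq V]
variable {E E₁ E₂ : Set (Sym2 V)} {N N₁ N₂ : ℕ}

theorem mono {E' : Set (Sym2 V)} {N' : ℕ} (hcov : G.HamiltonCoverable E N) (hE : E' ⊆ E)
    (hN : N ≤ N') : G.HamiltonCoverable E' N' :=
  let ⟨M, f, hM, hf, hfE⟩ := hcov
  ⟨M, f, hM.trans hN, hf, fun e he => hfE e (hE he)⟩

theorem empty : G.HamiltonCoverable ∅ 0 :=
  ⟨0, Fin.elim0, le_rfl, fun i => i.elim0, by simp⟩

theorem union (h₁ : G.HamiltonCoverable E₁ N₁) (h₂ : G.HamiltonCoverable E₂ N₂) :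
    G.HamiltonCoverable (E₁ ∪ E₂) (N₁ + N₂) := by
  obtain ⟨M₁, f₁, hM₁, hf₁, hE₁⟩ := h₁
  obtain ⟨M₂, f₂, hM₂, hf₂, hE₂⟩ := h₂
  refine ⟨M₁ + M₂, Fin.append f₁ f₂, by omega,
    Fin.addCases (fun i => by rw [Fin.append_left]; exact hf₁ i)
      (fun i => by rw [Fin.append_right]; exact hf₂ i), ?_⟩
  rintro e (he | he)
  · obtain ⟨i, hi⟩ := hE₁ e he
    exact ⟨Fin.castAdd M₂ i, by rwa [Fin.append_left]⟩
  · obtain ⟨i, hi⟩ := hE₂ e he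
    exact ⟨Fin.natAdd M₁ i, by rwa [Fin.append_right]⟩

theorem biUnion {ι : Type*} (s : Finset ι) {E : ι → Set (Sym2 V)}
    (h : ∀ i ∈ s, G.HamiltonCoverable (E i) N) :
    G.HamiltonCoverable (⋃ i ∈ s, E i) (#s * N) := by
  classical
  induction s using Finset.induction_on with
  | empty => simpa using empty
  | insert a s ha ih =>
    rw [set_biUnion_insert, card_insert_of_notMem ha, add_one_mul, add_comm]
    exact (h a (mem_insert_self a s)).union (ih fun i hi => h i (mem_insert_of_mem hi))

end HamiltonCoverable

end SimpleGraph

/-- if `G` has a Hamilton packing of size `h` (pairwise edge-disjoint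
Hamilton cycles) and every matching of `G` can be covered by at most `c` Hamilton
cycles of `G`, then `G` has a Hamilton covering of size at most
`h + 2c·(Δ(G) − 2h)`. -/
theorem stmt18 {V : Type*} [Fintype V] [DecidableEq V] (G : SimpleGraph V)
    [DecidableRel G.Adj] (h c : ℕ)
    (hpack : ∃ f : Fin h → Σ v : V, G.Walk v v,
      (∀ i, (f i).2.IsHamiltonianCycle) ∧
      ∀ i j, i ≠ j → ∀ e, e ∈ (f i).2.edges → e ∉ (f j).2.edges)
    (hcover : ∀ F : Finset (Sym2 V), (∀ e ∈ F, e ∈ G.edgeSet) →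
      (∀ e ∈ F, ∀ e' ∈ F, e ≠ e' → ∀ v : V, v ∈ e → v ∉ e') →
      ∃ (N : ℕ) (f : Fin N → Σ v : V, G.Walk v v), N ≤ c ∧
        (∀ i, (f i).2.IsHamiltonianCycle) ∧ ∀ e ∈ F, ∃ i, e ∈ (f i).2.edges) :
    ∃ (N : ℕ) (f : Fin N → Σ v : V, G.Walk v v),
      N ≤ h + 2 * c * (G.maxDegree - 2 * h) ∧
      (∀ i, (f i).2.IsHamiltonianCycle) ∧
      ∀ e ∈ G.edgeSet, ∃ i, e ∈ (f i).2.edges := by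
  obtain ⟨f, hf, hdisj⟩ := hpack
  set P := univ.biUnion fun i => (f i).2.edges.toFinset
  set k := G.maxDegree - 2 * h
  obtain ⟨col, hcol_lt, hcol⟩ := SimpleGraph.exists_matching_coloring_of_card_incident_le
    (G.edgeFinset \ P) k (G.card_incident_sdiff_edges_le_maxDegree_sub f hf hdisj)
  let colorClass (j : ℕ) : Finset (Sym2 V) := {e ∈ G.edgeFinset \ P | col e = j}
  have hpacked : G.HamiltonCoverable P h := ⟨h, f, le_rfl, hf, fun e he => by simpa [P] using he⟩
  have hrest : G.HamiltonCoverable (⋃ j ∈ range (2 * k), colorClass j) (#(range (2 * k)) * c) :=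
    SimpleGraph.HamiltonCoverable.biUnion _ fun j _ => hcover (colorClass j)
      (fun e he => SimpleGraph.mem_edgeFinset.mp (mem_sdiff.mp (mem_filter.mp he).1).1)
      (fun e he e' he' hne => hcol e (mem_filter.mp he).1 e' (mem_filter.mp he').1 hne
        ((mem_filter.mp he).2.trans (mem_filter.mp he').2.symm))
  refine (hpacked.union hrest).mono (fun e he => ?_) ?_
  · by_cases heP : e ∈ P
    · exact Or.inl heP
    · have heR : e ∈ G.edgeFinset \ P := mem_sdiff.mpr ⟨SimpleGraph.mem_edgeFinset.mpr he, heP⟩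
      exact Or.inr (Set.mem_biUnion (mem_range.mpr (hcol_lt e heR)) (mem_filter.mpr ⟨heR, rfl⟩))
  · rw [card_range, mul_right_comm]
end
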